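/- Consider two groups s ∈ {a, b} with shares n_s > 0, qualification rates α_s ∈ (0,1), continuous feature densities G_s⁰, G_s¹, Type 3 (manipulation-only) best responses with label-independent manipulation boost CDF T_{M,s} (continuously differentiable with density τ_{M,s}, T_{M,s}(0) = 0, T_{M,s}(T_{M,s}⁻¹(1 − C_{M,s})) = 1 − C_{M,s}) and cost C_{M,s} ∈ [0,1), manipulation impacts Ψ_s^y(θ) = ∫_{o_{M,s}(θ)}^{θ} G_s^y(z)(1 − T_{M,s}(θ − z)) dz with o_{M,s}(θ) = θ − T_{M,s}⁻¹(1 − C_{M,s}) > 0, strategic utility Û(θ_a, θ_b) = Σ_s n_s [u₊ α_s ∫_{θ_s}^∞ G_s¹ − u₋ (1−α_s) ∫_{θ_s}^∞ G_s⁰ + u₊ α_s Ψ_s¹(θ_s) − u₋ (1−α_s) Ψ_s⁰(θ_s)], and continuously differentiable constraint functions C_a, C_b with C_s'(θ) ≠ 0. If (θ̂_a, θ̂_b) is an interior local maximizer of Û subject to the constraint C_a(θ_a) = C_b(θ_b), then Σ_s n_s · [−u₊ α_s (C_{M,s} G_s¹(o_{M,s}(θ̂_s)) + ∫_{o_{M,s}(θ̂_s)}^{θ̂_s}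 G_s¹(z) τ_{M,s}(θ̂_s − z) dz) + u₋ (1−α_s)(C_{M,s} G_s⁰(o_{M,s}(θ̂_s)) + ∫_{o_{M,s}(θ̂_s)}^{θ̂_s} G_s⁰(z) τ_{M,s}(θ̂_s − z) dz)] / C_s'(θ̂_s) = 0. -/

import Mathlib

/-!
Near `(θ̂_a, θ̂_b)` the constraint set `C_a θ_a = C_b θ_b` is the graph of a function
`θ_b = φ θ_a` with `φ' = C_a' / C_b'` (inverse function theorem for `C_b`), so
`θ ↦ Û (θ, φ θ)` has a local extremum at `θ̂_a` and `∂_a Û + ∂_b Û · C_a' / C_b' = 0`.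
Each partial derivative is a Leibniz rule for the moving window of `Ψ`: after the substitution
`z = θ - u` and an integration by parts, `θ` enters only through the primitive of `G`, which is
`C¹` even though `G` is merely continuous. The tail term `-G θ` cancels the boundary term
`G θ (1 - T 0)` of `Ψ`, leaving the manipulation terms of the conclusion.
-/

noncomputable section

open Set MeasureTheory intervalIntegral

/-- Generalized inverse (quantile function) of a CDF. -/
def ginv (T : ℝ → ℝ) (p : ℝ) : ℝ := sInf {b : ℝ | p ≤ T b}

/-- Type 3 manipulation impact of agents with density `G`:
`Ψ(θ) = ∫_{o_M(θ)}^{θ} G(z)(1 - T_M(θ - z)) dz`, where `o_M(θ) = θ - T_M⁻¹(1 - C_M)`. -/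
def PsiT3 (G TM : ℝ → ℝ) (CM θ : ℝ) : ℝ :=
  ∫ z in (θ - ginv TM (1 - CM))..θ, G z * (1 - TM (θ - z))

open Filter Topology Metric

theorem hasDerivAt_integral_Ioi {G : ℝ → ℝ} {θ : ℝ} (hGi : Integrable G)
    (hGc : ContinuousAt G θ) : HasDerivAt (fun t => ∫ x in Ioi t, G x) (-G θ) θ := by
  have hsplit : (fun t => ∫ x in Ioi t, G x)
      = fun t => ((∫ x, G x) - ∫ x in Iic 0, G x) - ∫ x in (0 : ℝ)..t, G x := by
    funext t
    rw [← integral_Iic_sub_Iic hGi.integrableOn hGi.integrableOn,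
      ← integral_Iic_add_Ioi (b := t) hGi.integrableOn hGi.integrableOn]
    ring
  rw [hsplit]
  exact (integral_hasDerivAt_right hGi.intervalIntegrable
    hGi.aestronglyMeasurable.stronglyMeasurableAtFilter hGc).const_sub _

theorem hasDerivAt_intervalIntegral_sub_mul {f f' g : ℝ → ℝ} (a b θ : ℝ)
    (hf : ∀ x, HasDerivAt f (f' x) x) (hf' : Continuous f') (hg : Continuous g) :
    HasDerivAt (fun t => ∫ u in a..b, f (t - u) * g u) (∫ u in a..b, f' (θ - u) * g u) θ := by
  have hfc : Continuous f := continuous_iff_continuousAt.2 fun x => (hf x).continuousAt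
  have hF'c : Continuous fun p : ℝ × ℝ => f' (p.1 - p.2) * g p.2 := by fun_prop
  obtain ⟨M, hM⟩ := ((isCompact_closedBall θ 1).prod isCompact_uIcc).exists_bound_of_continuousOn
    (s := closedBall θ 1 ×ˢ uIcc a b) hF'c.continuousOn
  refine (intervalIntegral.hasDerivAt_integral_of_dominated_loc_of_deriv_le
    (F := fun t u => f (t - u) * g u) (F' := fun t u => f' (t - u) * g u) (μ := volume)
    (bound := fun _ => M) (ball_mem_nhds θ one_pos) (.of_forall fun t => ?_) ?_ ?_ ?_
    intervalIntegrable_const ?_).2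
  · exact (by fun_prop : Continuous fun u => f (t - u) * g u).aestronglyMeasurable
  · exact (by fun_prop : Continuous fun u => f (θ - u) * g u).intervalIntegrable _ _
  · exact (by fun_prop : Continuous fun u => f' (θ - u) * g u).aestronglyMeasurable
  · exact ae_of_all _ fun u hu x hx =>
      hM (x, u) ⟨ball_subset_closedBall hx, uIoc_subset_uIcc hu⟩
  · exact ae_of_all _ fun u _ x _ => ((hf (x - u)).comp_sub_const x u).mul_const (g u)

theorem intervalIntegral_mul_comp_sub (G H : ℝ → ℝ) (c t : ℝ) :
    ∫ z in (t - c)..t, G z * H (t - z) = ∫ u in (0 : ℝ)..c, G (t - u) * H u := by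
  simpa using (integral_comp_sub_left (fun z => G z * H (t - z)) t (a := 0) (b := c)).symm

theorem intervalIntegral_mul_comp_sub_eq_primitive {G K k : ℝ → ℝ} (c t : ℝ) (hG : Continuous G)
    (hK : ∀ x, HasDerivAt K (k x) x) (hk : Continuous k) :
    ∫ z in (t - c)..t, G z * K (t - z)
      = (∫ z in (0 : ℝ)..t, G z) * K 0 - (∫ z in (0 : ℝ)..(t - c), G z) * K c
        + ∫ u in (0 : ℝ)..c, (∫ z in (0 : ℝ)..(t - u), G z) * k u := by
  have hparts := integral_mul_deriv_eq_deriv_mul (a := 0) (b := c)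
    (u := fun x => -∫ z in (0 : ℝ)..(t - x), G z) (u' := fun x => G (t - x))
    (fun x _ => by
      simpa [Pi.neg_def] using
        ((hG.integral_hasStrictDerivAt 0 (t - x)).hasDerivAt.comp_const_sub t x).neg)
    (fun x _ => hK x) ((hG.comp (continuous_sub_left t)).intervalIntegrable _ _)
    (hk.intervalIntegrable _ _)
  simp only [neg_mul, intervalIntegral.integral_neg, sub_zero] at hparts
  rw [intervalIntegral_mul_comp_sub]
  linear_combination hparts

theorem hasDerivAt_intervalIntegral_mul_comp_sub {G K k : ℝ → ℝ} (c θ : ℝ) (hG : Continuous G)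
    (hK : ∀ x, HasDerivAt K (k x) x) (hk : Continuous k) :
    HasDerivAt (fun t => ∫ z in (t - c)..t, G z * K (t - z))
      (G θ * K 0 - G (θ - c) * K c + ∫ z in (θ - c)..θ, G z * k (θ - z)) θ := by
  have hprim (x : ℝ) : HasDerivAt (fun y => ∫ z in (0 : ℝ)..y, G z) (G x) x :=
    (hG.integral_hasStrictDerivAt 0 x).hasDerivAt
  rw [funext (intervalIntegral_mul_comp_sub_eq_primitive c · hG hK hk),
    intervalIntegral_mul_comp_sub]
  exact (((hprim θ).mul_const _).sub
    (((hprim (θ - c)).comp_sub_const θ c).mul_const _)).add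
    (hasDerivAt_intervalIntegral_sub_mul 0 c θ hprim hG hk)

theorem hasDerivAt_integral_Ioi_add_PsiT3 {G T τ : ℝ → ℝ} {CM : ℝ} (θ : ℝ) (hGi : Integrable G)
    (hG : Continuous G) (hT : ∀ b, HasDerivAt T (τ b) b) (hτ : Continuous τ) (hT0 : T 0 = 0)
    (hTinv : T (ginv T (1 - CM)) = 1 - CM) :
    HasDerivAt (fun t => (∫ x in Ioi t, G x) + PsiT3 G T CM t)
      (-(CM * G (θ - ginv T (1 - CM)) + ∫ z in (θ - ginv T (1 - CM))..θ, G z * τ (θ - z))) θ := by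
  have hPsi := hasDerivAt_intervalIntegral_mul_comp_sub (K := fun b => 1 - T b)
    (ginv T (1 - CM)) θ hG (fun b => (hT b).const_sub 1) hτ.neg
  simp only [hT0, hTinv, mul_neg, intervalIntegral.integral_neg] at hPsi
  exact ((hasDerivAt_integral_Ioi hGi hG.continuousAt).add hPsi).congr_deriv (by ring)

/-- The bracket of one group in the strategic utility `Û`. -/
def strategicGroupUtility (up um α CM : ℝ) (G0 G1 TM : ℝ → ℝ) (θ : ℝ) : ℝ :=
  up * α * (∫ x in Ioi θ, G1 x) - um * (1 - α) * (∫ x in Ioi θ, G0 x)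
    + up * α * PsiT3 G1 TM CM θ - um * (1 - α) * PsiT3 G0 TM CM θ

theorem hasDerivAt_strategicGroupUtility {up um α CM : ℝ} {G0 G1 TM τM : ℝ → ℝ} (θ : ℝ)
    (hG0i : Integrable G0) (hG1i : Integrable G1) (hG0 : Continuous G0) (hG1 : Continuous G1)
    (hTM : ∀ b, HasDerivAt TM (τM b) b) (hτM : Continuous τM) (hTM0 : TM 0 = 0)
    (hTMinv : TM (ginv TM (1 - CM)) = 1 - CM) :
    HasDerivAt (strategicGroupUtility up um α CM G0 G1 TM)
      (-(up * α) * (CM * G1 (θ - ginv TM (1 - CM))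
          + ∫ z in (θ - ginv TM (1 - CM))..θ, G1 z * τM (θ - z))
        + um * (1 - α) * (CM * G0 (θ - ginv TM (1 - CM))
          + ∫ z in (θ - ginv TM (1 - CM))..θ, G0 z * τM (θ - z))) θ := by
  have h1 := hasDerivAt_integral_Ioi_add_PsiT3 θ hG1i hG1 hTM hτM hTM0 hTMinv
  have h0 := hasDerivAt_integral_Ioi_add_PsiT3 θ hG0i hG0 hTM hτM hTM0 hTMinv
  refine (((h1.const_mul (up * α)).sub (h0.const_mul (um * (1 - α)))).congr_deriv (by ring))
    |>.congr_of_eventuallyEq (.of_forall fun t => ?_)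
  simp only [strategicGroupUtility, Pi.sub_apply]
  ring

theorem HasStrictDerivAt.exists_implicit_solution {Ca Cb : ℝ → ℝ} {ca cb a b : ℝ}
    (hCa : HasDerivAt Ca ca a) (hCb : HasStrictDerivAt Cb cb b) (hcb : cb ≠ 0)
    (hab : Ca a = Cb b) :
    ∃ φ : ℝ → ℝ, φ a = b ∧ HasDerivAt φ (ca / cb) a ∧ ∀ᶠ x in 𝓝 a, Ca x = Cb (φ x) := by
  set I := hCb.localInverse Cb cb b hcb
  have hI : HasDerivAt I cb⁻¹ (Ca a) := hab ▸ (hCb.to_localInverse hcb).hasDerivAt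
  refine ⟨I ∘ Ca, ?_, ?_, ?_⟩
  · change I (Ca a) = b
    rw [hab]
    exact (hCb.eventually_left_inverse hcb).self_of_nhds
  · simpa [div_eq_mul_inv, mul_comm] using hI.comp a hCa
  · have hCa_lim : Tendsto Ca (𝓝 a) (𝓝 (Cb b)) := hab ▸ hCa.continuousAt.tendsto
    filter_upwards [hCa_lim.eventually (hCb.eventually_right_inverse hcb)] with x hx
    exact hx.symm

theorem IsLocalExtrOn.div_add_div_eq_zero_of_level_set {f g Ca Cb : ℝ → ℝ}
    {f' g' ca cb a b : ℝ}
    (hextr : IsLocalExtrOn (fun p : ℝ × ℝ => f p.1 + g p.2) {p | Ca p.1 = Cb p.2} (a, b))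
    (hf : HasDerivAt f f' a) (hg : HasDerivAt g g' b) (hCa : HasDerivAt Ca ca a)
    (hCb : HasStrictDerivAt Cb cb b) (hca : ca ≠ 0) (hcb : cb ≠ 0) (hab : Ca a = Cb b) :
    f' / ca + g' / cb = 0 := by
  obtain ⟨φ, hφa, hφ, hφCb⟩ := hCb.exists_implicit_solution hCa hcb hab
  have hcurve : Tendsto (fun x => (x, φ x)) (𝓝 a) (𝓝[{p | Ca p.1 = Cb p.2}] (a, b)) := by
    refine tendsto_nhdsWithin_iff.2 ⟨?_, hφCb⟩
    simpa [hφa] using (continuousAt_id.prodMk hφ.continuousAt).tendsto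
  rw [← hφa] at hextr hcurve hg
  have hcurve_extr : IsLocalExtr (fun x => f x + g (φ x)) a :=
    hextr.comp_tendsto (g := fun x => (x, φ x)) hcurve
  have hcrit : f' + g' * (ca / cb) = 0 := hcurve_extr.hasDerivAt_eq_zero (hf.add (hg.comp a hφ))
  field_simp at hcrit ⊢
  linear_combination hcrit

theorem fair_strategic_foc_type3_general
    (up um na nb αa αb CMa CMb : ℝ)
    (G0a G1a G0b G1b TMa τMa TMb τMb Ca Cb Ca' Cb' : ℝ → ℝ)
    (hG0ac : Continuous G0a) (hG1ac : Continuous G1a)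
    (hG0bc : Continuous G0b) (hG1bc : Continuous G1b)
    (hG0ai : Integrable G0a) (hG1ai : Integrable G1a)
    (hG0bi : Integrable G0b) (hG1bi : Integrable G1b)
    (hτMac : Continuous τMa) (hTMa' : ∀ b, HasDerivAt TMa (τMa b) b)
    (hτMbc : Continuous τMb) (hTMb' : ∀ b, HasDerivAt TMb (τMb b) b)
    (hTMa0 : TMa 0 = 0) (hTMb0 : TMb 0 = 0)
    (hTMainv : TMa (ginv TMa (1 - CMa)) = 1 - CMa)
    (hTMbinv : TMb (ginv TMb (1 - CMb)) = 1 - CMb)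
    (hCa : ∀ θ, HasDerivAt Ca (Ca' θ) θ)
    (hCa'0 : ∀ θ, Ca' θ ≠ 0)
    (hCb : ∀ θ, HasDerivAt Cb (Cb' θ) θ) (hCb'c : Continuous Cb')
    (hCb'0 : ∀ θ, Cb' θ ≠ 0)
    (θa θb : ℝ)
    (hfeas : Ca θa = Cb θb)
    (hmax : IsLocalMaxOn
      (fun p : ℝ × ℝ =>
        na * (up * αa * (∫ x in Ioi p.1, G1a x)
              - um * (1 - αa) * (∫ x in Ioi p.1, G0a x)
              + up * αa * PsiT3 G1a TMa CMa p.1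
              - um * (1 - αa) * PsiT3 G0a TMa CMa p.1)
        + nb * (up * αb * (∫ x in Ioi p.2, G1b x)
              - um * (1 - αb) * (∫ x in Ioi p.2, G0b x)
              + up * αb * PsiT3 G1b TMb CMb p.2
              - um * (1 - αb) * PsiT3 G0b TMb CMb p.2))
      {p : ℝ × ℝ | Ca p.1 = Cb p.2} (θa, θb)) :
    na * (-(up * αa) * (CMa * G1a (θa - ginv TMa (1 - CMa))
            + ∫ z in (θa - ginv TMa (1 - CMa))..θa, G1a z * τMa (θa - z))
          + um * (1 - αa) * (CMa * G0a (θa - ginv TMa (1 - CMa))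
            + ∫ z in (θa - ginv TMa (1 - CMa))..θa, G0a z * τMa (θa - z))) / Ca' θa
    + nb * (-(up * αb) * (CMb * G1b (θb - ginv TMb (1 - CMb))
            + ∫ z in (θb - ginv TMb (1 - CMb))..θb, G1b z * τMb (θb - z))
          + um * (1 - αb) * (CMb * G0b (θb - ginv TMb (1 - CMb))
            + ∫ z in (θb - ginv TMb (1 - CMb))..θb, G0b z * τMb (θb - z))) / Cb' θb
    = 0 := by
  have hextr : IsLocalExtrOn
      (fun p : ℝ × ℝ => na * strategicGroupUtility up um αa CMa G0a G1a TMa p.1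
        + nb * strategicGroupUtility up um αb CMb G0b G1b TMb p.2)
      {p | Ca p.1 = Cb p.2} (θa, θb) :=
    hmax.isExtr
  have hUa := hasDerivAt_strategicGroupUtility (up := up) (um := um) (α := αa) θa
    hG0ai hG1ai hG0ac hG1ac hTMa' hτMac hTMa0 hTMainv
  have hUb := hasDerivAt_strategicGroupUtility (up := up) (um := um) (α := αb) θb
    hG0bi hG1bi hG0bc hG1bc hTMb' hτMbc hTMb0 hTMbinv
  have hCb_strict : HasStrictDerivAt Cb (Cb' θb) θb :=
    hasStrictDerivAt_of_hasDerivAt_of_continuousAt (.of_forall hCb) hCb'c.continuousAt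
  exact hextr.div_add_div_eq_zero_of_level_set (hUa.const_mul na) (hUb.const_mul nb)
    (hCa θa) hCb_strict (hCa'0 θa) (hCb'0 θb) hfeas

/-- First-order condition for the fair strategic firm under Type 3 (manipulation-only)
best responses (Lemma 5 combined with Lemma 3). -/
theorem fair_strategic_foc_type3
    (up um na nb αa αb CMa CMb : ℝ)
    (G0a G1a G0b G1b TMa τMa TMb τMb Ca Cb Ca' Cb' : ℝ → ℝ)
    (hup : 0 < up) (hum : 0 < um) (hna : 0 < na) (hnb : 0 < nb)
    (hαa : αa ∈ Ioo (0 : ℝ) 1) (hαb : αb ∈ Ioo (0 : ℝ) 1)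
    (hCMa : CMa ∈ Ico (0 : ℝ) 1) (hCMb : CMb ∈ Ico (0 : ℝ) 1)
    (hG0ac : Continuous G0a) (hG1ac : Continuous G1a)
    (hG0bc : Continuous G0b) (hG1bc : Continuous G1b)
    (hG0ann : ∀ x, 0 ≤ G0a x) (hG1ann : ∀ x, 0 ≤ G1a x)
    (hG0bnn : ∀ x, 0 ≤ G0b x) (hG1bnn : ∀ x, 0 ≤ G1b x)
    (hG0ai : Integrable G0a) (hG1ai : Integrable G1a)
    (hG0bi : Integrable G0b) (hG1bi : Integrable G1b)
    (hτMac : Continuous τMa) (hTMa' : ∀ b, HasDerivAt TMa (τMa b) b)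
    (hτMbc : Continuous τMb) (hTMb' : ∀ b, HasDerivAt TMb (τMb b) b)
    (hTMa0 : TMa 0 = 0) (hTMb0 : TMb 0 = 0)
    (hTMainv : TMa (ginv TMa (1 - CMa)) = 1 - CMa)
    (hTMbinv : TMb (ginv TMb (1 - CMb)) = 1 - CMb)
    (hCa : ∀ θ, HasDerivAt Ca (Ca' θ) θ) (hCa'c : Continuous Ca')
    (hCa'0 : ∀ θ, Ca' θ ≠ 0)
    (hCb : ∀ θ, HasDerivAt Cb (Cb' θ) θ) (hCb'c : Continuous Cb')
    (hCb'0 : ∀ θ, Cb' θ ≠ 0)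
    (θa θb : ℝ)
    (hoMa : ginv TMa (1 - CMa) < θa) (hoMb : ginv TMb (1 - CMb) < θb)
    (hfeas : Ca θa = Cb θb)
    (hmax : IsLocalMaxOn
      (fun p : ℝ × ℝ =>
        na * (up * αa * (∫ x in Ioi p.1, G1a x)
              - um * (1 - αa) * (∫ x in Ioi p.1, G0a x)
              + up * αa * PsiT3 G1a TMa CMa p.1
              - um * (1 - αa) * PsiT3 G0a TMa CMa p.1)
        + nb * (up * αb * (∫ x in Ioi p.2, G1b x)
              - um * (1 - αb) * (∫ x in Ioi p.2, G0b x)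
              + up * αb * PsiT3 G1b TMb CMb p.2
              - um * (1 - αb) * PsiT3 G0b TMb CMb p.2))
      {p : ℝ × ℝ | Ca p.1 = Cb p.2} (θa, θb)) :
    na * (-(up * αa) * (CMa * G1a (θa - ginv TMa (1 - CMa))
            + ∫ z in (θa - ginv TMa (1 - CMa))..θa, G1a z * τMa (θa - z))
          + um * (1 - αa) * (CMa * G0a (θa - ginv TMa (1 - CMa))
            + ∫ z in (θa - ginv TMa (1 - CMa))..θa, G0a z * τMa (θa - z))) / Ca' θa
    + nb * (-(up * αb) * (CMb * G1b (θb - ginv TMb (1 - CMb))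
            + ∫ z in (θb - ginv TMb (1 - CMb))..θb, G1b z * τMb (θb - z))
          + um * (1 - αb) * (CMb * G0b (θb - ginv TMb (1 - CMb))
            + ∫ z in (θb - ginv TMb (1 - CMb))..θb, G0b z * τMb (θb - z))) / Cb' θb
    = 0 :=
  fair_strategic_foc_type3_general up um na nb αa αb CMa CMb G0a G1a G0b G1b TMa τMa TMb τMb Ca Cb
    Ca' Cb' hG0ac hG1ac hG0bc hG1bc hG0ai hG1ai hG0bi hG1bi hτMac hTMa' hτMbc hTMb' hTMa0 hTMb0
    hTMainv hTMbinv hCa hCa'0 hCb hCb'c hCb'0 θa θb hfeas hmax
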